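/- Let n ≥ 2 and let H be an n×n positive semidefinite complex matrix. Define H' = fromBlocks (1 − E₀₀) 0 0 H, the 2n×2n block-diagonal matrix with top-left block 1 − E₀₀ and bottom-right block H. Then the spectral gap of H' satisfies Δ(H') = λ₂(H') − λ₁(H') = min(λ₁(H), 1), where λ₁(H) is the smallest eigenvalue of H. -/

import Mathlib

open ComplexOrder Matrix

/-- The `i`-th eigenvalue (0-indexed, with multiplicity, in nondecreasing order)
of a Hermitian matrix. -/
noncomputable def sortedEig {N : Type*} [Fintype N] [DecidableEq N]
    {M : Matrix N N ℂ} (hM : M.IsHermitian) (i : ℕ) : ℝ :=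
  ((Finset.univ.val.map hM.eigenvalues).sort (· ≤ ·)).getD i 0

open Polynomial in
private lemma charpoly_diagonal' {m : Type*} [Fintype m] [DecidableEq m] (d : m → ℂ) :
    (Matrix.diagonal d).charpoly = ∏ i, (X - C (d i)) := by
  have h : charmatrix (Matrix.diagonal d) = Matrix.diagonal (fun i => X - C (d i)) := by
    ext i j
    by_cases h : i = j
    · subst h; simp [charmatrix_apply_eq]
    · simp [charmatrix_apply_ne _ _ _ h, Matrix.diagonal_apply_ne _ h]
  rw [Matrix.charpoly, h, Matrix.det_diagonal]

open Polynomial in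
private lemma charpoly_unitary_conj' {m : Type*} [Fintype m] [DecidableEq m]
    (U : Matrix.unitaryGroup m ℂ) (D : Matrix m m ℂ) :
    ((U : Matrix m m ℂ) * D * (star (U : Matrix m m ℂ))).charpoly = D.charpoly := by
  set φ : Matrix m m ℂ →+* Matrix m m ℂ[X] := (C : ℂ →+* ℂ[X]).mapMatrix
  have hUV : (U : Matrix m m ℂ) * star (U : Matrix m m ℂ) = 1 :=
    (Matrix.mem_unitaryGroup_iff).mp U.2
  have hφ1 : φ (U : Matrix m m ℂ) * φ (star (U : Matrix m m ℂ)) = 1 := by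
    rw [← _root_.map_mul, hUV, _root_.map_one]
  have hc : charmatrix ((U : Matrix m m ℂ) * D * star (U : Matrix m m ℂ))
      = φ (U : Matrix m m ℂ) * charmatrix D * φ (star (U : Matrix m m ℂ)) := by
    simp only [charmatrix, mul_sub, sub_mul, _root_.map_mul]
    congr 1
    have hcomm : Commute (Matrix.scalar m (X : ℂ[X])) (φ (star (U : Matrix m m ℂ))) :=
      Matrix.scalar_commute _ (fun r => Commute.all _ _) _
    rw [mul_assoc, hcomm.eq, ← mul_assoc, hφ1, one_mul]
  rw [Matrix.charpoly, hc, Matrix.det_mul, Matrix.det_mul, Matrix.charpoly]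
  rw [mul_comm ((φ (U : Matrix m m ℂ)).det) _, mul_assoc, ← Matrix.det_mul, hφ1,
    Matrix.det_one, mul_one]

open Polynomial in
private lemma charpoly_hermitian {m : Type*} [Fintype m] [DecidableEq m]
    {M : Matrix m m ℂ} (hM : M.IsHermitian) :
    M.charpoly = ∏ i, (X - C ((hM.eigenvalues i : ℂ))) := by
  conv_lhs => rw [hM.spectral_theorem]
  rw [Unitary.conjStarAlgAut_apply]
  rw [charpoly_unitary_conj' hM.eigenvectorUnitary, charpoly_diagonal']
  rfl

open Polynomial in
private lemma roots_charpoly_hermitian {m : Type*} [Fintype m] [DecidableEq m]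
    {M : Matrix m m ℂ} (hM : M.IsHermitian) :
    M.charpoly.roots = Finset.univ.val.map (fun i => ((hM.eigenvalues i : ℂ))) := by
  rw [charpoly_hermitian hM]
  rw [show (∏ i, (X - C ((hM.eigenvalues i : ℂ))))
      = ((Finset.univ.val.map fun i => ((hM.eigenvalues i : ℂ))).map fun a => X - C a).prod by
    rw [Multiset.map_map]; rfl]
  exact roots_multiset_prod_X_sub_C _

/-- head of sorted list is the minimum -/
private lemma sort_getD_zero_min (s : Multiset ℝ) (hs : s ≠ 0) :
    ((s.sort (· ≤ ·)).getD 0 0 ∈ s) ∧ (∀ x ∈ s, (s.sort (· ≤ ·)).getD 0 0 ≤ x) := by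
  have hsort := Multiset.pairwise_sort s (· ≤ ·)
  have heq : ((s.sort (· ≤ ·) : List ℝ) : Multiset ℝ) = s := Multiset.sort_eq s _
  rcases h : s.sort (· ≤ ·) with _ | ⟨a, t⟩
  · exfalso; apply hs; rw [← heq, h]; rfl
  · rw [h] at hsort heq
    constructor
    · rw [← heq]; simp [List.getD]
    · intro x hx
      rw [← heq, Multiset.mem_coe] at hx
      rcases List.mem_cons.mp hx with hx | hx
      · simp [List.getD, hx]
      · simpa [List.getD] using (List.pairwise_cons.mp hsort).1 x hx

theorem blockHam_spectralGap {n : ℕ} (hn : 2 ≤ n)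
    (H : Matrix (Fin n) (Fin n) ℂ) (hH : H.PosSemidef)
    (H' : Matrix (Fin n ⊕ Fin n) (Fin n ⊕ Fin n) ℂ)
    (hHeq : H' = Matrix.fromBlocks
      (1 - Matrix.single (⟨0, by omega⟩ : Fin n) ⟨0, by omega⟩ 1) 0 0 H)
    (hH'h : H'.IsHermitian) :
    sortedEig hH'h 1 - sortedEig hH'h 0 = min (sortedEig hH.isHermitian 0) 1 := by
  classical
  set z : Fin n := ⟨0, by omega⟩ with hz
  set dR : Fin n → ℝ := fun i => if i = z then 0 else 1 with hdR
  set dC : Fin n → ℂ := fun i => if i = z then 0 else 1 with hdC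
  -- the top-left block is diagonal
  have hA : (1 - Matrix.single z z 1 : Matrix (Fin n) (Fin n) ℂ)
      = Matrix.diagonal dC := by
    ext i j
    by_cases hij : i = j
    · subst hij
      by_cases hiz : i = z <;>
        simp [Matrix.single, Matrix.one_apply, Matrix.diagonal_apply, hdC, hiz, eq_comm]
    · simp only [Matrix.sub_apply, Matrix.one_apply_ne hij, Matrix.diagonal_apply_ne _ hij]
      simp [Matrix.single]
      intro h1 h2; exact absurd (h1.symm.trans h2) hij
  -- charpoly roots of H'
  open Polynomial in
  have hroots : H'.charpoly.roots
      = Finset.univ.val.map dC + Finset.univ.val.map (fun i => ((hH.isHermitian.eigenvalues i : ℂ))) := by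
    rw [hHeq, Matrix.charpoly_fromBlocks_zero₂₁, Polynomial.roots_mul
      (mul_ne_zero (Matrix.charpoly_monic _).ne_zero (Matrix.charpoly_monic _).ne_zero),
      hA, charpoly_diagonal', roots_charpoly_hermitian hH.isHermitian]
    congr 1
    rw [show (∏ i, (X - C (dC i)))
        = ((Finset.univ.val.map dC).map fun a => X - C a).prod by
      rw [Multiset.map_map]; rfl]
    exact roots_multiset_prod_X_sub_C _
  -- the real eigenvalue multiset of H'
  have hdCR : dC = fun i => ((dR i : ℂ)) := by
    funext i; by_cases h : i = z <;> simp [hdC, hdR, h]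
  have hmain : Finset.univ.val.map hH'h.eigenvalues
      = Finset.univ.val.map dR + Finset.univ.val.map hH.isHermitian.eigenvalues := by
    apply Multiset.map_injective (Complex.ofReal_injective)
    rw [Multiset.map_map, Multiset.map_add, Multiset.map_map, Multiset.map_map]
    simp only [Function.comp_def]
    rw [← roots_charpoly_hermitian hH'h, hroots, hdCR]
  -- decompose the dR part
  have hzmem : z ∈ Finset.univ.erase z → False := fun h => (Finset.mem_erase.mp h).1 rfl
  have huniv : (Finset.univ : Finset (Fin n)).val = z ::ₘ (Finset.univ.erase z).val := by
    conv_lhs => rw [← Finset.insert_erase (Finset.mem_univ z)]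
    exact Finset.insert_val_of_notMem (fun h => hzmem h)
  have hrep : Finset.univ.val.map dR = (0 : ℝ) ::ₘ Multiset.replicate (n - 1) (1 : ℝ) := by
    rw [huniv, Multiset.map_cons]
    have h1 : dR z = 0 := by simp [hdR]
    rw [h1]
    congr 1
    rw [Multiset.eq_replicate]
    constructor
    · rw [Multiset.card_map]
      simp [Finset.card_erase_of_mem (Finset.mem_univ z)]
    · intro b hb
      obtain ⟨i, hi, hbi⟩ := Multiset.mem_map.mp hb
      have hiz : i ≠ z := fun h => hzmem (by rwa [h] at hi)
      rw [← hbi]; simp [hdR, hiz]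
  set T : Multiset ℝ :=
    Multiset.replicate (n - 1) (1 : ℝ) + Finset.univ.val.map hH.isHermitian.eigenvalues with hT
  have hS : Finset.univ.val.map hH'h.eigenvalues = (0 : ℝ) ::ₘ T := by
    rw [hmain, hrep, hT, Multiset.cons_add]
  -- membership facts about T
  have hTmem : ∀ x ∈ T, x = 1 ∨ ∃ i, x = hH.isHermitian.eigenvalues i := by
    intro x hx
    rcases Multiset.mem_add.mp hx with h | h
    · exact Or.inl (Multiset.eq_of_mem_replicate h)
    · obtain ⟨i, _, hi⟩ := Multiset.mem_map.mp h
      exact Or.inr ⟨i, hi.symm⟩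
  have hTnonneg : ∀ x ∈ T, (0 : ℝ) ≤ x := by
    intro x hx
    rcases hTmem x hx with h | ⟨i, h⟩
    · rw [h]; norm_num
    · rw [h]; exact hH.eigenvalues_nonneg i
  have h1T : (1 : ℝ) ∈ T := by
    refine Multiset.mem_add.mpr (Or.inl (Multiset.mem_replicate.mpr ⟨by omega, rfl⟩))
  -- λ₁ of H
  have hEne : Finset.univ.val.map hH.isHermitian.eigenvalues ≠ 0 := by
    simp [Multiset.map_eq_zero, Finset.val_eq_zero]
    omega
  obtain ⟨hl1mem, hl1le⟩ := sort_getD_zero_min _ hEne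
  set l1 : ℝ := sortedEig hH.isHermitian 0 with hl1
  have hl1T : l1 ∈ T := Multiset.mem_add.mpr (Or.inr hl1mem)
  -- sorted list of H' eigenvalues
  have hsortS : (Finset.univ.val.map hH'h.eigenvalues).sort (· ≤ ·)
      = 0 :: T.sort (· ≤ ·) := by
    rw [hS]; exact Multiset.sort_cons _ _ _ hTnonneg
  have hTne : T ≠ 0 := fun h => by rw [h] at h1T; exact absurd h1T (Multiset.notMem_zero 1)
  obtain ⟨hmmem, hmle⟩ := sort_getD_zero_min T hTne
  set m : ℝ := (T.sort (· ≤ ·)).getD 0 0 with hm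
  have h0 : sortedEig hH'h 0 = 0 := by
    rw [sortedEig, hsortS]; rfl
  have h1 : sortedEig hH'h 1 = m := by
    rw [sortedEig, hsortS]; rfl
  rw [h0, h1, sub_zero]
  -- m = min l1 1
  apply le_antisymm
  · exact le_min (hmle l1 hl1T) (hmle 1 h1T)
  · rcases hTmem m hmmem with h | ⟨i, h⟩
    · rw [h]; exact min_le_right _ _
    · rw [h]; exact le_trans (min_le_left _ _) (hl1le _ (Multiset.mem_map_of_mem _ (Finset.mem_univ i)))
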